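/- (One-step contraction toward the leader.) Let n ≥ 2, ε > 0, 0 < δ2 ≤ ε/(2n), and consider n ordinary agents together with a leader agent with fixed opinion A. Suppose at time t the opinions satisfy max_{i,j∈V} |x_i(t) − x_j(t)| ≤ ε and max_{i∈V} |x_i(t) − A| ≤ ε, and x(t+1) is obtained by the noisy HK update with leader using a noise value ξ(t+1) with |ξ(t+1)| ≤ δ2. Then x_i(t+1) = (A + ∑_{k=1}^n x_k(t))/(n+1) + 1_{{i=1}}·ξ(t+1) for all i ∈ V; consequently max_{i,j∈V} |x_i(t+1) − x_j(t+1)| = |ξ(t+1)| ≤ δ2 ≤ ε and max_{i∈V} |A − x_i(t+1)| ≤ (n/(n+1))·max_{i∈V} |A − x_i(t)| + δ2 ≤ ε. -/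

import Mathlib

/-!
Since all opinions lie within `ε` of each other and of the leader, every agent listens to
everybody, so all agents move to the same average `c = (A + ∑ₖ xₖ)/(n + 1)` and only agent `1`
is displaced, by `ξ`. Hence the spread becomes `|ξ|`, and `A - c` is the average of the `n`
deviations `A - xₖ` together with the leader's own deviation `0`, which gives the factor
`n/(n + 1)`.
-/

open Finset

/-- Neighbor set of agent `i` in the Hegselmann–Krause model with confidence threshold `ε`. -/
noncomputable def hkNbr {n : ℕ} (ε : ℝ) (x : Fin n → ℝ) (i : Fin n) : Finset (Fin n) :=
  Finset.univ.filter fun j => |x j - x i| ≤ ε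

/-- Noisy HK update with a leader of fixed opinion `A`: the leader's opinion enters the
average whenever `|A - x i| ≤ ε`, and agent `1` (index `0`) receives the noise `ξ`. -/
noncomputable def hkLeaderStep {n : ℕ} (ε A : ℝ) (x : Fin n → ℝ) (ξ : ℝ) (i : Fin n) : ℝ :=
  ((∑ j ∈ hkNbr ε x i, x j) + (if |A - x i| ≤ ε then A else 0))
    / (((hkNbr ε x i).card : ℝ) + (if |A - x i| ≤ ε then 1 else 0))
  + (if (i : ℕ) = 0 then ξ else 0)

lemma hkNbr_eq_univ {n : ℕ} {ε : ℝ} {x : Fin n → ℝ} {i : Fin n}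
    (h : ∀ j, |x j - x i| ≤ ε) : hkNbr ε x i = univ :=
  filter_true_of_mem fun j _ => h j

lemma hkLeaderStep_of_forall_abs_sub_le {n : ℕ} {ε A : ℝ} {x : Fin n → ℝ} (ξ : ℝ) {i : Fin n}
    (hx : ∀ j, |x j - x i| ≤ ε) (hA : |A - x i| ≤ ε) :
    hkLeaderStep ε A x ξ i = (A + ∑ k, x k) / ((n : ℝ) + 1) + (if (i : ℕ) = 0 then ξ else 0) := by
  rw [hkLeaderStep, hkNbr_eq_univ hx, if_pos hA, if_pos hA, card_univ, Fintype.card_fin,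
    add_comm A]

lemma iSup_iSup_abs_sub_add_ite {ι : Type*} [Finite ι] (c ξ : ℝ) (p : ι → Prop)
    [DecidablePred p] {i₀ i₁ : ι} (h₀ : p i₀) (h₁ : ¬ p i₁) :
    ⨆ i, ⨆ j, |(c + if p i then ξ else 0) - (c + if p j then ξ else 0)| = |ξ| := by
  have : Nonempty ι := ⟨i₀⟩
  refine le_antisymm (ciSup_le fun i => ciSup_le fun j => ?_) ?_
  · split_ifs <;> simp
  · exact le_ciSup_of_le (Finite.bddAbove_range _) i₀ <|
      le_ciSup_of_le (Finite.bddAbove_range _) i₁ (by simp [h₀, h₁])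

lemma abs_sub_average_insert_le {ι : Type*} [Fintype ι] {A M : ℝ} {x : ι → ℝ}
    (h : ∀ k, |A - x k| ≤ M) :
    |A - (A + ∑ k, x k) / (Fintype.card ι + 1)| ≤ Fintype.card ι / (Fintype.card ι + 1) * M := by
  have hN : (0 : ℝ) < Fintype.card ι + 1 := by positivity
  have hdev : A - (A + ∑ k, x k) / (Fintype.card ι + 1) =
      (∑ k, (A - x k)) / (Fintype.card ι + 1) := by
    rw [sum_sub_distrib, sum_const, card_univ, nsmul_eq_mul]
    field_simp
    ring
  rw [hdev, abs_div, abs_of_pos hN, div_mul_eq_mul_div]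
  gcongr
  calc |∑ k, (A - x k)| ≤ ∑ k, |A - x k| := abs_sum_le_sum_abs _ _
    _ ≤ ∑ _k : ι, M := sum_le_sum fun k _ => h k
    _ = Fintype.card ι * M := by rw [sum_const, card_univ, nsmul_eq_mul]

theorem hk_leader_one_step_contraction_general (n : ℕ) (hn : 2 ≤ n) (ε δ2 A : ℝ)
    (hε : 0 < ε) (hδ2 : δ2 ≤ ε / (2 * n))
    (x xnext : Fin n → ℝ) (ξ : ℝ)
    (hd : ∀ i j, |x i - x j| ≤ ε)
    (hdA : ∀ i, |x i - A| ≤ ε)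
    (hξ : |ξ| ≤ δ2)
    (hupd : ∀ i, xnext i = hkLeaderStep ε A x ξ i) :
    (∀ i, xnext i = (A + ∑ k, x k) / ((n : ℝ) + 1)
        + (if (i : ℕ) = 0 then ξ else 0)) ∧
    (⨆ i, ⨆ j, |xnext i - xnext j|) = |ξ| ∧
    (⨆ i, |A - xnext i|) ≤ ((n : ℝ) / (n + 1)) * (⨆ i, |A - x i|) + δ2 ∧
    ((n : ℝ) / (n + 1)) * (⨆ i, |A - x i|) + δ2 ≤ ε := by
  have : Nonempty (Fin n) := ⟨⟨0, by omega⟩⟩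
  have hAx : ∀ i, |A - x i| ≤ ε := fun i => abs_sub_comm A (x i) ▸ hdA i
  have hstep : ∀ i, xnext i = (A + ∑ k, x k) / ((n : ℝ) + 1) + (if (i : ℕ) = 0 then ξ else 0) :=
    fun i => (hupd i).trans (hkLeaderStep_of_forall_abs_sub_le ξ (fun j => hd j i) (hAx i))
  set c := (A + ∑ k, x k) / ((n : ℝ) + 1)
  set M := ⨆ i, |A - x i|
  have hMx : ∀ i, |A - x i| ≤ M := le_ciSup (Finite.bddAbove_range _)
  have hc : |A - c| ≤ n / (n + 1) * M := by
    simpa using abs_sub_average_insert_le hMx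
  have hnoise : ∀ i : Fin n, |if (i : ℕ) = 0 then ξ else 0| ≤ δ2 := fun i => by
    split_ifs <;> simp [(abs_nonneg ξ).trans hξ, hξ]
  have hnε : (n : ℝ) / (n + 1) * M + ε / (n + 1) ≤ ε := by
    calc (n : ℝ) / (n + 1) * M + ε / (n + 1) ≤ n / (n + 1) * ε + ε / (n + 1) := by
          gcongr; exact ciSup_le hAx
      _ = ε := by field_simp
  have hδε : δ2 ≤ ε / (n + 1) := hδ2.trans <| by
    have : (2 : ℝ) ≤ n := by exact_mod_cast hn
    gcongr; linarith
  refine ⟨hstep, ?_, ?_, by linarith⟩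
  · simp_rw [hstep]
    exact iSup_iSup_abs_sub_add_ite c ξ _ (i₀ := ⟨0, by omega⟩) (i₁ := ⟨1, by omega⟩)
      rfl one_ne_zero
  · refine ciSup_le fun i => ?_
    rw [hstep, ← sub_sub]
    linarith [abs_sub (A - c) (if (i : ℕ) = 0 then ξ else 0), hnoise i]

/-- One-step contraction toward the leader. -/
theorem hk_leader_one_step_contraction (n : ℕ) (hn : 2 ≤ n) (ε δ2 A : ℝ)
    (hε : 0 < ε) (hδ2pos : 0 < δ2) (hδ2 : δ2 ≤ ε / (2 * n))
    (x xnext : Fin n → ℝ) (ξ : ℝ)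
    (hd : ∀ i j, |x i - x j| ≤ ε)
    (hdA : ∀ i, |x i - A| ≤ ε)
    (hξ : |ξ| ≤ δ2)
    (hupd : ∀ i, xnext i = hkLeaderStep ε A x ξ i) :
    (∀ i, xnext i = (A + ∑ k, x k) / ((n : ℝ) + 1)
        + (if (i : ℕ) = 0 then ξ else 0)) ∧
    (⨆ i, ⨆ j, |xnext i - xnext j|) = |ξ| ∧
    (⨆ i, |A - xnext i|) ≤ ((n : ℝ) / (n + 1)) * (⨆ i, |A - x i|) + δ2 ∧
    ((n : ℝ) / (n + 1)) * (⨆ i, |A - x i|) + δ2 ≤ ε :=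
  hk_leader_one_step_contraction_general n hn ε δ2 A hε hδ2 x xnext ξ hd hdA hξ hupd
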